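/- Let F be a Fréchet space with C^ω ⊆ F ⊆₀ C⁰. Then there exists a compact subset L of F with property (ℋ): for every ε > 0, L contains the image in C⁰ of a neighborhood of 0 in C^ω_ε, i.e. there exists δ > 0 such that L contains the restriction to the closed unit disk of every holomorphic function on (1+ε)𝔻 bounded in modulus by δ. -/

import Mathlib

open Complex Metric Set Filter Topology

/-- The closed unit disk in `ℂ`. -/
abbrev cDisk : Set ℂ := Metric.closedBall 0 1

instance : CompactSpace cDisk := isCompact_iff_compactSpace.mp (isCompact_closedBall (0 : ℂ) 1)

/-- Extension by `0` of a continuous map on a subset of `ℂ`. -/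
noncomputable def extc {S : Set ℂ} (f : C(S, ℂ)) : ℂ → ℂ :=
  open Classical in fun z => if hz : z ∈ S then f ⟨z, hz⟩ else 0

/-- Membership in `C⁰`: a continuous function on the closed unit disk that is
holomorphic on its interior. -/
def MemC0 (f : C(cDisk, ℂ)) : Prop := DifferentiableOn ℂ (extc f) (Metric.ball 0 1)

/-- Membership in `C^ω`: the restriction to the closed unit disk of a function
holomorphic on a neighborhood of it. -/
def MemComega (f : C(cDisk, ℂ)) : Prop :=
  ∃ δ : ℝ, 0 < δ ∧ ∃ g : ℂ → ℂ, DifferentiableOn ℂ g (Metric.ball 0 (1 + δ)) ∧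
    ∀ z : cDisk, f z = g z


open BoundedContinuousFunction
section PropHAuxSec
namespace PropHAux

noncomputable section

/-- The power series `∑ (c k / R^k) z^k`. -/
def gser (R : ℝ) (c : ℕ →ᵇ ℂ) : FormalMultilinearSeries ℂ ℂ ℂ :=
  FormalMultilinearSeries.ofScalars ℂ (fun n => c n / (R : ℂ) ^ n)

/-- Its sum. -/
def gsum (R : ℝ) (c : ℕ →ᵇ ℂ) : ℂ → ℂ := (gser R c).sum

variable {R r : ℝ} (hR : 1 < R) (c d : ℕ →ᵇ ℂ)

lemma gser_norm (h : 0 ≤ R) (n : ℕ) : ‖gser R c n‖ = ‖c n‖ / R ^ n := by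
  rw [gser, FormalMultilinearSeries.ofScalars_norm]
  simp [norm_div, _root_.abs_of_nonneg h]

include hR in
lemma radius_ge : ENNReal.ofReal R ≤ (gser R c).radius := by
  refine ENNReal.le_of_forall_nnreal_lt (fun s hs => ?_)
  have hsR : (s : ℝ) < R := by
    rwa [ENNReal.lt_ofReal_iff_toReal_lt ENNReal.coe_ne_top, ENNReal.coe_toReal] at hs
  refine FormalMultilinearSeries.le_radius_of_bound _ ‖c‖ (fun n => ?_)
  have hR0 : (0:ℝ) < R := by linarith
  rw [gser_norm c hR0.le]
  have h1 : ‖c n‖ / R ^ n * (s:ℝ) ^ n = ‖c n‖ * (s / R) ^ n := by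
    rw [div_pow]; ring
  rw [h1]
  have h2 : (s / R : ℝ) ^ n ≤ 1 := by
    apply pow_le_one₀ (by positivity)
    rw [div_le_one hR0]; linarith
  calc ‖c n‖ * (s/R)^n ≤ ‖c‖ * 1 := by
        apply mul_le_mul (BoundedContinuousFunction.norm_coe_le_norm c n) h2 (by positivity)
          (norm_nonneg _)
    _ = ‖c‖ := mul_one _

include hR in
lemma mem_eball {z : ℂ} (hz : ‖z‖ < R) : z ∈ Metric.eball (0:ℂ) (gser R c).radius := by
  rw [Metric.mem_eball, edist_zero_right]
  refine lt_of_lt_of_le ?_ (radius_ge hR c)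
  rw [ENNReal.lt_ofReal_iff_toReal_lt enorm_ne_top]
  simpa using hz

include hR in
lemma hasSum_gsum {z : ℂ} (hz : ‖z‖ < R) :
    HasSum (fun n => (c n / (R : ℂ) ^ n) * z ^ n) (gsum R c z) := by
  have h := (gser R c).hasSum (mem_eball hR c hz)
  have he : (fun n => (gser R c) n fun _ => z) = fun n => (c n / (R : ℂ) ^ n) * z ^ n := by
    funext n
    rw [gser, FormalMultilinearSeries.ofScalars_apply_eq, smul_eq_mul]
  rwa [he] at h

include hR in
lemma gsum_diff : DifferentiableOn ℂ (gsum R c) (Metric.ball 0 R) := by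
  have h0 : 0 < (gser R c).radius :=
    lt_of_lt_of_le (by rw [ENNReal.ofReal_pos]; linarith : (0:ENNReal) < ENNReal.ofReal R)
      (radius_ge hR c)
  have h := ((gser R c).hasFPowerSeriesOnBall h0).differentiableOn
  rw [gsum]
  refine h.mono (fun z hz => ?_)
  rw [mem_ball, dist_zero_right] at hz
  exact mem_eball hR c hz

include hR in
lemma gsum_bound {z : ℂ} (hz : ‖z‖ ≤ 1) : ‖gsum R c z‖ ≤ ‖c‖ * (1 - R⁻¹)⁻¹ := by
  have hR0 : (0:ℝ) < R := by linarith
  have hlt : ‖z‖ < R := lt_of_le_of_lt hz hR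
  have h := (hasSum_gsum hR c hlt).tsum_eq
  rw [← h]
  have hgeo : HasSum (fun n : ℕ => ‖c‖ * R⁻¹ ^ n) (‖c‖ * (1 - R⁻¹)⁻¹) := by
    exact (hasSum_geometric_of_lt_one (by positivity) (by rw [inv_lt_one_iff₀]; right; exact hR)).mul_left _
  refine tsum_of_norm_bounded hgeo (fun n => ?_)
  rw [norm_mul, norm_div, norm_pow, norm_pow, Complex.norm_real]
  rw [Real.norm_eq_abs, _root_.abs_of_pos hR0]
  calc ‖c n‖ / R ^ n * ‖z‖ ^ n ≤ ‖c‖ / R ^ n * 1 ^ n := by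
        have h1 : ‖c n‖ ≤ ‖c‖ := BoundedContinuousFunction.norm_coe_le_norm c n
        have h2 : ‖z‖ ^ n ≤ 1 ^ n := pow_le_pow_left₀ (norm_nonneg _) hz n
        have h3 : (0:ℝ) < R ^ n := by positivity
        calc ‖c n‖ / R ^ n * ‖z‖ ^ n ≤ ‖c‖ / R ^ n * ‖z‖ ^ n := by gcongr
          _ ≤ ‖c‖ / R ^ n * 1 ^ n := by gcongr
    _ = ‖c‖ * R⁻¹ ^ n := by rw [one_pow, mul_one, div_eq_mul_inv, inv_pow]

include hR in
lemma gsum_sub {z : ℂ} (hz : ‖z‖ < R) :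
    gsum R (c - d) z = gsum R c z - gsum R d z := by
  have h1 := hasSum_gsum hR c hz
  have h2 := hasSum_gsum hR d hz
  have h3 := hasSum_gsum hR (c - d) hz
  have h4 : HasSum (fun n => ((c - d) n / (R:ℂ)^n) * z^n)
      (gsum R c z - gsum R d z) := by
    have := h1.sub h2
    convert this using 2 with n
    · rfl
    simp only [BoundedContinuousFunction.coe_sub, Pi.sub_apply, BoundedContinuousFunction.sub_apply]
    ring
  exact h3.unique h4

include hR in
lemma gsum_smul (l : ℂ) {z : ℂ} (hz : ‖z‖ < R) :
    gsum R (l • c) z = l * gsum R c z := by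
  have h1 := (hasSum_gsum hR c hz).mul_left l
  have h3 := hasSum_gsum hR (l • c) hz
  have h4 : HasSum (fun n => ((l • c) n / (R:ℂ)^n) * z^n) (l * gsum R c z) := by
    convert h1 using 2 with n
    · rfl
    simp only [BoundedContinuousFunction.coe_smul, Pi.smul_apply, smul_eq_mul, BoundedContinuousFunction.smul_apply]
    ring
  exact h3.unique h4

lemma gsum_shift (hr : 1 < r) (hrR : r ≤ R) (h : ∀ k, (d k : ℂ) / (r:ℂ) ^ k = c k / (R:ℂ) ^ k)
    {z : ℂ} (hz : ‖z‖ < r) : gsum R c z = gsum r d z := by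
  have hzR : ‖z‖ < R := lt_of_lt_of_le hz hrR
  have h1 := hasSum_gsum (lt_of_lt_of_le hr hrR) c hzR
  have h2 := hasSum_gsum hr d hz
  have : (fun n => (d n / (r:ℂ)^n) * z^n) = fun n => (c n / (R:ℂ)^n) * z^n := by
    funext n; rw [h n]
  rw [this] at h2
  exact h1.unique h2

end



section ClosedGraph

variable {B : Type*} {F : Type*} [NormedAddCommGroup B] [NormedSpace ℂ B] [CompleteSpace B]
  [AddCommGroup F] [Module ℂ F] [MetricSpace F] [IsTopologicalAddGroup F]
  [ContinuousSMul ℂ F] [CompleteSpace F]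

variable (hdist : ∀ x y z : F, dist (x + z) (y + z) = dist x y)

include hdist in
lemma dist_sub_zero (x y : F) : dist (x - y) 0 = dist x y := by
  have h := hdist (x - y) 0 y
  rw [sub_add_cancel, zero_add] at h
  exact h.symm

include hdist in
lemma dist_add_right (x y : F) : dist (x + y) y = dist x 0 := by
  have h := hdist x 0 y
  rwa [zero_add] at h

include hdist in
/-- Baire category step: the "zero set preimages" are somewhere dense, hence
a small ball lands in the closure of each of them. -/
theorem step_baire (T : B → F)
    (Tsub : ∀ a b : B, T (a - b) = T a - T b)
    (Tsmul : ∀ (l : ℂ) (b : B), T (l • b) = l • T b)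
    {r : ℝ} (hr : 0 < r) :
    ∃ δ > 0, ∀ b : B, ‖b‖ < δ → b ∈ closure {a : B | dist (T a) 0 ≤ r} := by
  set S : Set B := {a : B | dist (T a) 0 ≤ r / 2} with hSdef
  have hcover : (⋃ m : ℕ, closure ((fun b : B => ((m : ℂ) + 1) • b) '' S)) = univ := by
    refine eq_univ_of_forall (fun b => ?_)
    rw [mem_iUnion]
    have h0 : Tendsto (fun m : ℕ => ((m : ℝ) + 1)⁻¹) atTop (𝓝 0) := by
      simpa [one_div] using tendsto_one_div_add_atTop_nhds_zero_nat (𝕜 := ℝ)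
    have h2 : Tendsto (fun m : ℕ => ((m : ℂ) + 1)⁻¹ • T b) atTop (𝓝 0) := by
      have h1 : Tendsto (fun m : ℕ => ((((m : ℝ) + 1)⁻¹ : ℝ) : ℂ)) atTop (𝓝 ((0 : ℝ) : ℂ)) :=
        (Complex.continuous_ofReal.tendsto _).comp h0
      have he : (fun m : ℕ => ((((m : ℝ) + 1)⁻¹ : ℝ) : ℂ)) = fun m : ℕ => ((m : ℂ) + 1)⁻¹ := by
        funext m; push_cast; ring
      rw [he] at h1
      have hc : Tendsto (fun _ : ℕ => T b) atTop (𝓝 (T b)) := tendsto_const_nhds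
      simpa using h1.smul hc
    have h3 : ∀ᶠ m : ℕ in atTop, dist (((m : ℂ) + 1)⁻¹ • T b) 0 ≤ r / 2 :=
      (Metric.tendsto_nhds.mp h2 (r / 2) (by positivity)).mono (fun m hm => le_of_lt hm)
    obtain ⟨m, hm⟩ := h3.exists
    refine ⟨m, subset_closure ?_⟩
    have hM0 : ((m : ℂ) + 1) ≠ 0 := Nat.cast_add_one_ne_zero m
    refine ⟨((m : ℂ) + 1)⁻¹ • b, ?_, smul_inv_smul₀ hM0 b⟩
    rw [hSdef, mem_setOf_eq, Tsmul]
    exact hm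
  obtain ⟨m, b₀, hb₀⟩ := nonempty_interior_of_iUnion_of_closed
    (fun m : ℕ => isClosed_closure) hcover
  rw [mem_interior_iff_mem_nhds, Metric.mem_nhds_iff] at hb₀
  obtain ⟨ρ, hρ, hball⟩ := hb₀
  set M : ℂ := (m : ℂ) + 1 with hMdef
  have hM0 : M ≠ 0 := Nat.cast_add_one_ne_zero m
  have hMn : (0 : ℝ) < ‖M‖ := norm_pos_iff.mpr hM0
  refine ⟨ρ / ‖M‖, by positivity, fun b hb => ?_⟩
  rw [Metric.mem_closure_iff]
  intro ε hε
  have hMb : ‖M • b‖ < ρ := by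
    rw [norm_smul]
    have hab : ‖M‖ ≠ 0 := ne_of_gt hMn
    calc ‖M‖ * ‖b‖ < ‖M‖ * (ρ / ‖M‖) := by gcongr
      _ = ρ := by field_simp
  have h1 : b₀ + M • b ∈ closure ((fun b : B => M • b) '' S) := by
    apply hball
    rw [mem_ball, dist_eq_norm, add_sub_cancel_left]
    exact hMb
  have h2 : b₀ ∈ closure ((fun b : B => M • b) '' S) := hball (mem_ball_self hρ)
  obtain ⟨s₁', hs₁', hd₁⟩ := Metric.mem_closure_iff.mp h1 (ε * ‖M‖ / 2) (by positivity)
  obtain ⟨s₂', hs₂', hd₂⟩ := Metric.mem_closure_iff.mp h2 (ε * ‖M‖ / 2) (by positivity)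
  obtain ⟨s₁, hs₁S, rfl⟩ := hs₁'
  obtain ⟨s₂, hs₂S, rfl⟩ := hs₂'
  refine ⟨s₁ - s₂, ?_, ?_⟩
  · rw [mem_setOf_eq, Tsub, dist_sub_zero hdist]
    calc dist (T s₁) (T s₂) ≤ dist (T s₁) 0 + dist 0 (T s₂) := dist_triangle _ _ _
      _ ≤ r / 2 + r / 2 := by
          refine add_le_add hs₁S ?_
          rw [dist_comm]; exact hs₂S
      _ = r := by ring
  · rw [dist_eq_norm]
    have hkey : b - (s₁ - s₂) = M⁻¹ • ((b₀ + M • b - M • s₁) - (b₀ - M • s₂)) := by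
      rw [smul_sub, smul_sub, smul_add, smul_sub, inv_smul_smul₀ hM0, inv_smul_smul₀ hM0,
        inv_smul_smul₀ hM0]
      abel
    rw [hkey, norm_smul, norm_inv]
    have hsum : ‖(b₀ + M • b - M • s₁) - (b₀ - M • s₂)‖ < ε * ‖M‖ := by
      calc ‖(b₀ + M • b - M • s₁) - (b₀ - M • s₂)‖
          ≤ ‖b₀ + M • b - M • s₁‖ + ‖b₀ - M • s₂‖ := norm_sub_le _ _
        _ < ε * ‖M‖ / 2 + ε * ‖M‖ / 2 := by
            refine add_lt_add ?_ ?_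
            · rwa [dist_eq_norm] at hd₁
            · rwa [dist_eq_norm] at hd₂
        _ = ε * ‖M‖ := by ring
    calc ‖M‖⁻¹ * ‖(b₀ + M • b - M • s₁) - (b₀ - M • s₂)‖ < ‖M‖⁻¹ * (ε * ‖M‖) := by
          gcongr
      _ = ε := by
          have hab : ‖M‖ ≠ 0 := ne_of_gt hMn
          field_simp
include hdist in
theorem cont_at_zero (T : B → F)
    (Tsub : ∀ a b : B, T (a - b) = T a - T b)
    (Tsmul : ∀ (l : ℂ) (b : B), T (l • b) = l • T b)
    (Tgraph : ∀ (u : ℕ → B) (y : F), Tendsto u atTop (𝓝 0) →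
      Tendsto (fun n => T (u n)) atTop (𝓝 y) → y = 0)
    {η : ℝ} (hη : 0 < η) :
    ∃ δ > 0, ∀ b : B, ‖b‖ ≤ δ → dist (T b) 0 ≤ η := by
  have T0 : T 0 = 0 := by
    have h := Tsub 0 0
    simpa using h
  have hstep : ∀ k : ℕ, ∃ δ > 0, ∀ b : B, ‖b‖ < δ →
      b ∈ closure {a : B | dist (T a) 0 ≤ η / 2 ^ (k + 2)} :=
    fun k => step_baire hdist T Tsub Tsmul (by positivity)
  choose δ' hδ'pos hδ' using hstep
  set δ : ℕ → ℝ := fun k => min (δ' k) ((1/2) ^ k) with hδdef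
  have hδpos : ∀ k, 0 < δ k := fun k => lt_min (hδ'pos k) (by positivity)
  have hδle : ∀ k, δ k ≤ δ' k := fun k => min_le_left _ _
  have hδsmall : ∀ k, δ k ≤ (1/2) ^ k := fun k => min_le_right _ _
  have hch : ∀ (k : ℕ) (v : B), ‖v‖ < δ k → ∃ s : B,
      dist (T s) 0 ≤ η / 2 ^ (k + 2) ∧ ‖v - s‖ < δ (k + 1) := by
    intro k v hv
    have hcl := hδ' k v (lt_of_lt_of_le hv (hδle k))
    obtain ⟨s, hsS, hd⟩ := Metric.mem_closure_iff.mp hcl (δ (k+1)) (hδpos _)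
    exact ⟨s, hsS, by rwa [dist_eq_norm] at hd⟩
  refine ⟨δ 0 / 2, by have := hδpos 0; linarith, fun b hb => ?_⟩
  let u : ℕ → B := fun n => Nat.rec b
    (fun k uk => if h : ‖uk‖ < δ k then uk - (hch k uk h).choose else 0) n
  have hu0 : u 0 = b := rfl
  have hnorm : ∀ k, ‖u k‖ < δ k := by
    intro k
    induction k with
    | zero =>
        calc ‖u 0‖ = ‖b‖ := rfl
          _ ≤ δ 0 / 2 := hb
          _ < δ 0 := by have := hδpos 0; linarith
    | succ k ih =>
        have he : u (k+1) = u k - (hch k (u k) ih).choose := by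
          show (if h : ‖u k‖ < δ k then u k - (hch k (u k) h).choose else 0) = _
          rw [dif_pos ih]
        rw [he]
        exact ((hch k (u k) ih).choose_spec).2
  set s : ℕ → B := fun k => (hch k (u k) (hnorm k)).choose with hsdef
  have hs1 : ∀ k, dist (T (s k)) 0 ≤ η / 2 ^ (k + 2) :=
    fun k => ((hch k (u k) (hnorm k)).choose_spec).1
  have hue : ∀ k, u (k+1) = u k - s k := by
    intro k
    show (if h : ‖u k‖ < δ k then u k - (hch k (u k) h).choose else 0) = _
    rw [dif_pos (hnorm k)]
  set y : ℕ → F := fun m => T (b - u m) with hydef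
  have hy0 : y 0 = 0 := by
    show T (b - u 0) = 0
    rw [hu0, sub_self, T0]
  have hystep : ∀ m, y (m+1) = y m + T (s m) := by
    intro m
    have he : b - u (m+1) = (b - u m) - (0 - s m) := by rw [hue m]; abel
    show T (b - u (m+1)) = T (b - u m) + T (s m)
    rw [he, Tsub (b - u m) (0 - s m), Tsub 0 (s m), T0, zero_sub, sub_neg_eq_add, Tsub b (u m)]
  have hdy : ∀ m, dist (y (m+1)) (y m) = dist (T (s m)) 0 := by
    intro m
    rw [hystep m, add_comm (y m) (T (s m))]
    exact dist_add_right hdist (T (s m)) (y m)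
  have hcauchy : CauchySeq y := by
    apply cauchySeq_of_le_geometric (1/2 : ℝ) (η/2) (by norm_num)
    intro n
    rw [dist_comm, hdy n]
    calc dist (T (s n)) 0 ≤ η / 2 ^ (n+2) := hs1 n
      _ = η/4 * (1/2)^n := by rw [one_div, inv_pow]; ring
      _ ≤ η/2 * (1/2)^n := by gcongr <;> linarith
  obtain ⟨yl, hyl⟩ := cauchySeq_tendsto_of_complete hcauchy
  have hbd : ∀ m, dist (y m) 0 ≤ η/2 - η/2^(m+1) := by
    intro m
    induction m with
    | zero =>
        rw [hy0, dist_self]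
        norm_num
    | succ m ih =>
        show dist (y (m+1)) 0 ≤ η/2 - η/2^(m+2)
        have heq : η/2^(m+2) + η/2^(m+2) = η/2^(m+1) := by ring
        calc dist (y (m+1)) 0 ≤ dist (y (m+1)) (y m) + dist (y m) 0 := dist_triangle _ _ _
          _ ≤ η/2^(m+2) + (η/2 - η/2^(m+1)) := by
              refine add_le_add ?_ ih
              rw [hdy m]
              exact hs1 m
          _ ≤ η/2 - η/2^(m+2) := by linarith
  have hylbd : dist yl 0 ≤ η := by
    have hco : Tendsto (fun m => dist (y m) 0) atTop (𝓝 (dist yl 0)) :=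
      hyl.dist tendsto_const_nhds
    refine le_of_tendsto hco (Eventually.of_forall (fun m => ?_))
    have h1 := hbd m
    have h2 : (0:ℝ) < η/2^(m+1) := by positivity
    linarith
  have hu0' : Tendsto u atTop (𝓝 0) := by
    apply squeeze_zero_norm (fun m => le_of_lt (lt_of_lt_of_le (hnorm m) (hδsmall m)))
    exact tendsto_pow_atTop_nhds_zero_of_lt_one (by norm_num) (by norm_num)
  have hTu : Tendsto (fun m => T (u m)) atTop (𝓝 (T b - yl)) := by
    have he : (fun m => T (u m)) = fun m => T b - y m := by
      funext m
      show T (u m) = T b - T (b - u m)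
      rw [Tsub, sub_sub_cancel]
    rw [he]
    exact tendsto_const_nhds.sub hyl
  have hz := Tgraph u (T b - yl) hu0' hTu
  have hfin : T b = yl := by rwa [sub_eq_zero] at hz
  rw [hfin]
  exact hylbd

end ClosedGraph

end PropHAux
end PropHAuxSec

set_option maxHeartbeats 2000000 in
/-- For every Fréchet space `F` with `C^ω ⊆ F ⊆₀ C⁰` (encoded by a continuous injective
linear map `ι : F → C(cDisk, ℂ)` with image inside `C⁰` and containing `C^ω`), there is a
compact subset `L` of `F` with property `(ℋ)`: for every `ε > 0` there is `δ > 0` such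
that `L` contains (the element of `F` corresponding to) the restriction to the closed
unit disk of every holomorphic function on `(1+ε)𝔻` bounded in modulus by `δ`. -/
theorem exists_compact_with_property_H (F : Type*) [AddCommGroup F] [Module ℂ F]
    [MetricSpace F] [IsTopologicalAddGroup F] [ContinuousSMul ℂ F] [CompleteSpace F]
    [Module ℝ F] [IsScalarTower ℝ ℂ F] [LocallyConvexSpace ℝ F]
    (hdist : ∀ x y z : F, dist (x + z) (y + z) = dist x y)
    (ι : F →ₗ[ℂ] C(cDisk, ℂ)) (hι : Continuous ι) (hinj : Function.Injective ι)
    (hC0 : ∀ x : F, MemC0 (ι x))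
    (hCω : ∀ f : C(cDisk, ℂ), MemComega f → f ∈ Set.range ι) :
    ∃ L : Set F, IsCompact L ∧
      ∀ ε : ℝ, 0 < ε → ∃ δ : ℝ, 0 < δ ∧
        ∀ g : ℂ → ℂ, DifferentiableOn ℂ g (Metric.ball 0 (1 + ε)) →
          (∀ z ∈ Metric.ball (0 : ℂ) (1 + ε), ‖g z‖ ≤ δ) →
          ∃ x ∈ L, ∀ z : cDisk, ι x z = g z := by
  classical
  -- basic facts about points of the disk
  have hz1 : ∀ z : cDisk, ‖(z : ℂ)‖ ≤ 1 := fun z => by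
    have hz := z.2
    rwa [mem_closedBall, dist_zero_right] at hz
  -- the map T, defined by choice
  have hmem : ∀ (R : ℝ), 1 < R → ∀ c : ℕ →ᵇ ℂ,
      ∃ x : F, ∀ z : cDisk, ι x z = PropHAux.gsum R c z := by
    intro R hR c
    have hdiff := PropHAux.gsum_diff hR c
    have hcont : Continuous (fun z : cDisk => PropHAux.gsum R c ↑z) := by
      have h1 : ContinuousOn (PropHAux.gsum R c) cDisk :=
        (hdiff.continuousOn).mono (closedBall_subset_ball (by linarith))
      exact h1.restrict
    have hmo : MemComega (ContinuousMap.mk _ hcont) := by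
      refine ⟨R - 1, by linarith, PropHAux.gsum R c, ?_, fun z => rfl⟩
      have he : 1 + (R - 1) = R := by ring
      rw [he]
      exact hdiff
    obtain ⟨x, hx⟩ := hCω _ hmo
    exact ⟨x, fun z => by rw [hx]; rfl⟩
  choose T hT using hmem
  -- algebraic properties of T
  have hTsub : ∀ (R : ℝ) (hR : 1 < R) (c d : ℕ →ᵇ ℂ),
      T R hR (c - d) = T R hR c - T R hR d := by
    intro R hR c d
    apply hinj
    rw [map_sub]
    apply ContinuousMap.ext
    intro z
    have hz : ‖(z : ℂ)‖ < R := lt_of_le_of_lt (hz1 z) hR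
    rw [ContinuousMap.sub_apply, hT R hR (c - d) z, hT R hR c z, hT R hR d z]
    exact PropHAux.gsum_sub hR c d hz
  have hTsmul : ∀ (R : ℝ) (hR : 1 < R) (l : ℂ) (c : ℕ →ᵇ ℂ),
      T R hR (l • c) = l • T R hR c := by
    intro R hR l c
    apply hinj
    rw [map_smul]
    apply ContinuousMap.ext
    intro z
    have hz : ‖(z : ℂ)‖ < R := lt_of_le_of_lt (hz1 z) hR
    rw [ContinuousMap.smul_apply, hT R hR (l • c) z, hT R hR c z, smul_eq_mul]
    exact PropHAux.gsum_smul hR c l hz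
  have hT0 : ∀ (R : ℝ) (hR : 1 < R), T R hR 0 = 0 := by
    intro R hR
    have h := hTsub R hR 0 0
    simpa using h
  have hTadd : ∀ (R : ℝ) (hR : 1 < R) (c d : ℕ →ᵇ ℂ),
      T R hR (c + d) = T R hR c + T R hR d := by
    intro R hR c d
    have h1 : c + d = c - (0 - d) := by abel
    rw [h1, hTsub R hR c (0 - d), hTsub R hR 0 d, hT0 R hR, zero_sub, sub_neg_eq_add]
  -- graph property
  have hTgraph : ∀ (R : ℝ) (hR : 1 < R) (u : ℕ → (ℕ →ᵇ ℂ)) (w : F),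
      Filter.Tendsto u Filter.atTop (nhds 0) →
      Filter.Tendsto (fun n => T R hR (u n)) Filter.atTop (nhds w) → w = 0 := by
    intro R hR u w hu hTw
    have hk : (0 : ℝ) < (1 - R⁻¹)⁻¹ := by
      have : R⁻¹ < 1 := by
        rw [inv_lt_one_iff₀]; right; exact hR
      have h2 : 0 < 1 - R⁻¹ := by linarith
      positivity
    have h1 : Filter.Tendsto (fun n => ι (T R hR (u n))) Filter.atTop (nhds (ι w)) :=
      (hι.tendsto w).comp hTw
    have h2 : Filter.Tendsto (fun n => ι (T R hR (u n))) Filter.atTop (nhds (ι 0)) := by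
      rw [map_zero]
      have hb : ∀ n, dist (ι (T R hR (u n))) 0 ≤ ‖u n‖ * (1 - R⁻¹)⁻¹ := by
        intro n
        rw [ContinuousMap.dist_le (by positivity)]
        intro z
        rw [ContinuousMap.zero_apply, dist_zero_right, hT R hR (u n) z]
        exact PropHAux.gsum_bound hR (u n) (hz1 z)
      rw [tendsto_iff_dist_tendsto_zero]
      apply squeeze_zero (fun n => dist_nonneg) hb
      have h3 : Filter.Tendsto (fun n => ‖u n‖) Filter.atTop (nhds 0) := by
        have := (continuous_norm.tendsto (0 : ℕ →ᵇ ℂ)).comp hu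
        simpa [Function.comp_def] using this
      simpa using h3.mul_const ((1 - R⁻¹)⁻¹)
    exact hinj (tendsto_nhds_unique h1 h2)
  -- continuity at zero, from the closed graph argument
  have contT : ∀ (R : ℝ) (hR : 1 < R) (η : ℝ), 0 < η →
      ∃ δ > 0, ∀ c : ℕ →ᵇ ℂ, ‖c‖ ≤ δ → dist (T R hR c) 0 ≤ η := by
    intro R hR η hη
    exact PropHAux.cont_at_zero hdist (T R hR) (hTsub R hR) (hTsmul R hR)
      (hTgraph R hR) hη
  -- the radii
  set Rs : ℕ → ℝ := fun n => 1 + 1 / ((n : ℝ) + 1) with hRsdef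
  have hRs : ∀ n, 1 < Rs n := by
    intro n
    have : (0 : ℝ) < 1 / ((n : ℝ) + 1) := by positivity
    simp only [hRsdef]
    linarith
  choose δm hδmpos hδmspec using fun n : ℕ =>
    contT (Rs n) (hRs n) (1 / ((n : ℝ) + 1)) (by positivity)
  -- the compact pieces
  set Cs : ℕ → Set F :=
    fun n => closure ((fun c => T (Rs n) (hRs n) c) '' (Metric.closedBall 0 (δm n)))
    with hCsdef
  have hCsball : ∀ n, Cs n ⊆ Metric.closedBall (0 : F) (1 / ((n : ℝ) + 1)) := by
    intro n
    apply closure_minimal _ isClosed_closedBall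
    rintro x ⟨c, hc, rfl⟩
    rw [mem_closedBall, dist_zero_right] at hc
    rw [mem_closedBall]
    exact hδmspec n c hc
  -- compactness of each piece
  have hCscompact : ∀ n, IsCompact (Cs n) := by
    intro n
    apply TotallyBounded.isCompact_of_isClosed _ isClosed_closure
    apply TotallyBounded.closure
    rw [Metric.totallyBounded_iff]
    intro ε hε
    have hR0 : 1 < Rs n := hRs n
    have hr0 : 1 < Rs (n + 1) := hRs (n + 1)
    have hr0R : Rs (n + 1) < Rs n := by
      simp only [hRsdef]
      have h1 : ((n : ℝ) + 1) < ((n + 1 : ℕ) : ℝ) + 1 := by push_cast; linarith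
      have h2 : (0 : ℝ) < (n : ℝ) + 1 := by positivity
      have := one_div_lt_one_div_of_lt h2 h1
      linarith
    set θ : ℝ := Rs (n + 1) / Rs n with hθdef
    have hθpos : 0 < θ := by
      have : (0:ℝ) < Rs n := by linarith
      have h2 : (0:ℝ) < Rs (n+1) := by linarith
      positivity
    have hθlt : θ < 1 := by
      rw [hθdef, div_lt_one (by linarith : (0:ℝ) < Rs n)]
      exact hr0R
    obtain ⟨δ', hδ'pos, hδ'spec⟩ := contT (Rs (n + 1)) hr0 (ε / 4) (by linarith)
    obtain ⟨m, hm⟩ := exists_pow_lt_of_lt_one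
      (show (0:ℝ) < δ' / δm n by have := hδmpos n; positivity) hθlt
    have htail : δm n * θ ^ (m + 1) ≤ δ' := by
      have h1 : θ ^ (m + 1) ≤ θ ^ m :=
        pow_le_pow_of_le_one hθpos.le hθlt.le (Nat.le_succ m)
      have h2 : δm n * θ ^ m < δ' := by
        have h3 := mul_lt_mul_of_pos_left hm (hδmpos n)
        rwa [mul_div_cancel₀ _ (ne_of_gt (hδmpos n))] at h3
      nlinarith [hδmpos n]
    -- unit vectors
    set unit : ℕ → (ℕ →ᵇ ℂ) := fun k =>
      BoundedContinuousFunction.ofNormedAddCommGroupDiscrete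
        (fun j => if j = k then (1 : ℂ) else 0) 1
        (by intro j; split <;> simp) with hunitdef
    set e : ℕ → F := fun k => T (Rs n) (hRs n) (unit k) with hedef
    -- compact head set
    set H : Set F := (fun v : Fin (m + 1) → ℂ => ∑ k : Fin (m + 1), v k • e k) ''
      (Metric.closedBall 0 (δm n)) with hHdef
    have hHc : IsCompact H := by
      apply (isCompact_closedBall _ _).image
      exact continuous_finset_sum _ (fun k _ => (continuous_apply k).smul continuous_const)
    obtain ⟨t, htfin, htcover⟩ :=
      Metric.totallyBounded_iff.mp hHc.totallyBounded (ε / 4) (by linarith)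
    refine ⟨t, htfin, ?_⟩
    rintro x ⟨c, hc, rfl⟩
    have hcnorm : ‖c‖ ≤ δm n := by rwa [mem_closedBall, dist_zero_right] at hc
    -- head and tail
    set hd : ℕ →ᵇ ℂ := BoundedContinuousFunction.ofNormedAddCommGroupDiscrete
      (fun j => if j ≤ m then c j else 0) ‖c‖
      (by
        intro j; split
        · exact BoundedContinuousFunction.norm_coe_le_norm c j
        · simp) with hhddef
    set tl : ℕ →ᵇ ℂ := c - hd with htldef
    have htl : ∀ j, tl j = if j ≤ m then 0 else c j := by
      intro j
      simp only [htldef, BoundedContinuousFunction.coe_sub, Pi.sub_apply, hhddef,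
        BoundedContinuousFunction.coe_ofNormedAddCommGroupDiscrete]
      split <;> simp
    have hx1 : T (Rs n) (hRs n) c = T (Rs n) (hRs n) hd + T (Rs n) (hRs n) tl := by
      rw [← hTadd]
      congr 1
      rw [htldef]
      abel
    -- the tail, re-expanded at the smaller radius
    set dv : ℕ →ᵇ ℂ := BoundedContinuousFunction.ofNormedAddCommGroupDiscrete
      (fun j => tl j * ((θ : ℝ) : ℂ) ^ j) (δm n * θ ^ (m + 1))
      (by
        intro j
        rw [norm_mul, norm_pow, Complex.norm_real, Real.norm_eq_abs,
          _root_.abs_of_pos hθpos]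
        rcases le_or_gt j m with hj | hj
        · rw [htl j, if_pos hj]
          simp only [norm_zero, zero_mul]
          exact mul_nonneg (hδmpos n).le (pow_nonneg hθpos.le _)
        · rw [htl j, if_neg (not_le.mpr hj)]
          have h1 : ‖c j‖ ≤ δm n := le_trans (BoundedContinuousFunction.norm_coe_le_norm c j) hcnorm
          have h2 : θ ^ j ≤ θ ^ (m + 1) :=
            pow_le_pow_of_le_one hθpos.le hθlt.le (by omega)
          have h3 : (0:ℝ) ≤ θ ^ j := by positivity
          nlinarith [norm_nonneg (c j)]) with hdvdef
    have hdvnorm : ‖dv‖ ≤ δ' := by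
      refine le_trans (BoundedContinuousFunction.norm_ofNormedAddCommGroup_le _ ?_ _) htail
      exact mul_nonneg (hδmpos n).le (pow_nonneg hθpos.le _)
    have hTtl : T (Rs n) (hRs n) tl = T (Rs (n + 1)) hr0 dv := by
      apply hinj
      apply ContinuousMap.ext
      intro z
      rw [hT (Rs n) (hRs n) tl z, hT (Rs (n + 1)) hr0 dv z]
      refine PropHAux.gsum_shift _ _ hr0 hr0R.le ?_ (lt_of_le_of_lt (hz1 z) hr0)
      · intro k
        have hR0ne : ((Rs n : ℝ) : ℂ) ≠ 0 := by
          simp only [ne_eq, Complex.ofReal_eq_zero]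
          linarith
        have hr0ne : ((Rs (n + 1) : ℝ) : ℂ) ≠ 0 := by
          simp only [ne_eq, Complex.ofReal_eq_zero]
          linarith
        have hdvk : dv k = tl k * ((θ : ℝ) : ℂ) ^ k := rfl
        rw [hdvk, hθdef]
        push_cast
        field_simp
        ring_nf
        rw [mul_assoc, ← mul_pow, mul_inv_cancel₀ hR0ne, one_pow, mul_one]
    have hdist1 : dist (T (Rs n) (hRs n) c) (T (Rs n) (hRs n) hd) ≤ ε / 4 := by
      rw [hx1, hTtl, add_comm]
      rw [PropHAux.dist_add_right hdist]
      exact hδ'spec dv hdvnorm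
    -- the head lies in H
    have hhd : T (Rs n) (hRs n) hd ∈ H := by
      refine ⟨fun k : Fin (m + 1) => c k, ?_, ?_⟩
      · rw [mem_closedBall, dist_zero_right]
        rw [pi_norm_le_iff_of_nonneg (hδmpos n).le]
        intro k
        exact le_trans (BoundedContinuousFunction.norm_coe_le_norm c k) hcnorm
      · have hsum : hd = ∑ k : Fin (m + 1), c (k : ℕ) • unit (k : ℕ) := by
          ext j
          rw [BoundedContinuousFunction.coe_sum, Finset.sum_apply]
          simp only [BoundedContinuousFunction.coe_smul, Pi.smul_apply, hunitdef,
            BoundedContinuousFunction.coe_ofNormedAddCommGroupDiscrete, smul_eq_mul, hhddef]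
          rcases le_or_gt j m with hj | hj
          · rw [if_pos hj]
            rw [Finset.sum_eq_single (⟨j, by omega⟩ : Fin (m + 1))]
            · simp [hj]
            · intro k _ hk
              have : j ≠ (k : ℕ) := by
                intro h
                apply hk
                apply Fin.ext
                simp [← h]
              rw [if_neg this, mul_zero]
            · intro h
              exact absurd (Finset.mem_univ _) h
          · rw [if_neg (not_le.mpr hj)]
            symm
            apply Finset.sum_eq_zero
            intro k _
            have : j ≠ (k : ℕ) := by omega
            rw [if_neg this, mul_zero]
        dsimp only
        rw [hsum]
        set φ : (ℕ →ᵇ ℂ) →+ F := AddMonoidHom.mk' (T (Rs n) (hRs n)) (hTadd (Rs n) (hRs n))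
          with hφdef
        have hφ : T (Rs n) (hRs n) (∑ k : Fin (m + 1), c (k : ℕ) • unit (k : ℕ)) =
            ∑ k : Fin (m + 1), T (Rs n) (hRs n) (c (k : ℕ) • unit (k : ℕ)) :=
          map_sum φ _ _
        rw [hφ]
        apply Finset.sum_congr rfl
        intro k _
        rw [hTsmul]
    obtain ⟨y, hyt, hxy⟩ := mem_iUnion₂.mp (htcover hhd)
    apply mem_biUnion hyt
    rw [mem_ball] at hxy ⊢
    calc dist (T (Rs n) (hRs n) c) y
        ≤ dist (T (Rs n) (hRs n) c) (T (Rs n) (hRs n) hd) + dist (T (Rs n) (hRs n) hd) y :=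
          dist_triangle _ _ _
      _ < ε / 4 + ε / 4 := by
          apply add_lt_add_of_le_of_lt hdist1 hxy
      _ ≤ ε := by linarith
  -- the compact set L
  set L : Set F := {0} ∪ ⋃ n, Cs n with hLdef
  have hCsL : ∀ n, Cs n ⊆ L := fun n => subset_union_of_subset_right
    (subset_iUnion Cs n) _
  have hLtb : TotallyBounded L := by
    rw [Metric.totallyBounded_iff]
    intro ε hε
    obtain ⟨N, hN⟩ := exists_nat_one_div_lt hε
    have hKc : IsCompact (⋃ n ∈ Finset.range (N + 1), Cs n) :=
      (Finset.range (N + 1)).isCompact_biUnion (fun n _ => hCscompact n)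
    obtain ⟨t, htf, htc⟩ := Metric.totallyBounded_iff.mp hKc.totallyBounded ε hε
    refine ⟨t ∪ {0}, htf.union (finite_singleton 0), ?_⟩
    intro x hx
    rcases hx with hx | hx
    · rw [mem_singleton_iff] at hx
      subst hx
      exact mem_biUnion (mem_union_right _ rfl) (mem_ball_self hε)
    · obtain ⟨n, hn⟩ := mem_iUnion.mp hx
      by_cases hnN : n ≤ N
      · have hxK : x ∈ ⋃ n ∈ Finset.range (N + 1), Cs n :=
          mem_biUnion (Finset.mem_range.mpr (by omega)) hn
        obtain ⟨y, hyt, hxy⟩ := mem_iUnion₂.mp (htc hxK)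
        exact mem_biUnion (mem_union_left _ hyt) hxy
      · have hx0 : dist x 0 ≤ 1 / ((n : ℝ) + 1) := by
          have := hCsball n hn
          rwa [mem_closedBall] at this
        have hle : (1 : ℝ) / ((n : ℝ) + 1) ≤ 1 / ((N : ℝ) + 1) := by
          apply one_div_le_one_div_of_le (by positivity)
          have : (N : ℝ) ≤ (n : ℝ) := by exact_mod_cast Nat.le_of_lt (by omega)
          linarith
        refine mem_biUnion (mem_union_right _ rfl) ?_
        rw [mem_ball]
        calc dist x 0 ≤ 1 / ((n : ℝ) + 1) := hx0
          _ ≤ 1 / ((N : ℝ) + 1) := hle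
          _ < ε := hN
  have hLclosed : IsClosed L := by
    rw [← isOpen_compl_iff, Metric.isOpen_iff]
    intro x hx
    rw [mem_compl_iff] at hx
    have hx0 : x ≠ 0 := by
      intro h
      exact hx (Or.inl (by rw [h]; exact rfl))
    have hd0 : 0 < dist x 0 := dist_pos.mpr hx0
    obtain ⟨N, hN⟩ := exists_nat_one_div_lt (half_pos hd0)
    have hKclosed : IsClosed (⋃ n ∈ Finset.range (N + 1), Cs n) :=
      isClosed_biUnion_finset (fun n _ => isClosed_closure)
    have hxK : x ∉ ⋃ n ∈ Finset.range (N + 1), Cs n := by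
      intro h
      obtain ⟨n, _, hn⟩ := mem_iUnion₂.mp h
      exact hx (hCsL n hn)
    obtain ⟨r1, hr1, hball1⟩ := Metric.isOpen_iff.mp hKclosed.isOpen_compl x hxK
    refine ⟨min r1 (dist x 0 / 2), lt_min hr1 (half_pos hd0), ?_⟩
    intro y hy
    rw [mem_ball] at hy
    rw [mem_compl_iff]
    intro hyL
    rcases hyL with hy0 | hyC
    · rw [mem_singleton_iff] at hy0
      subst hy0
      have h1 : dist (0 : F) x = dist x 0 := by rw [dist_comm]
      have h2 : dist (0 : F) x < dist x 0 / 2 :=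
        lt_of_lt_of_le hy (min_le_right _ _)
      rw [h1] at h2
      linarith
    · obtain ⟨n, hn⟩ := mem_iUnion.mp hyC
      by_cases hnN : n ≤ N
      · have hyK : y ∈ ⋃ n ∈ Finset.range (N + 1), Cs n :=
          mem_biUnion (Finset.mem_range.mpr (by omega)) hn
        have : y ∈ (⋃ n ∈ Finset.range (N + 1), Cs n)ᶜ :=
          hball1 (by rw [mem_ball]; exact lt_of_lt_of_le hy (min_le_left _ _))
        exact this hyK
      · have hy0 : dist y 0 ≤ 1 / ((n : ℝ) + 1) := by
          have := hCsball n hn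
          rwa [mem_closedBall] at this
        have hle : (1 : ℝ) / ((n : ℝ) + 1) ≤ 1 / ((N : ℝ) + 1) := by
          apply one_div_le_one_div_of_le (by positivity)
          have : (N : ℝ) ≤ (n : ℝ) := by exact_mod_cast Nat.le_of_lt (by omega)
          linarith
        have h1 : dist x 0 ≤ dist x y + dist y 0 := dist_triangle _ _ _
        have h2 : dist x y < dist x 0 / 2 := by
          rw [dist_comm]
          exact lt_of_lt_of_le hy (min_le_right _ _)
        have h3 : dist y 0 < dist x 0 / 2 := by
          calc dist y 0 ≤ 1 / ((n : ℝ) + 1) := hy0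
            _ ≤ 1 / ((N : ℝ) + 1) := hle
            _ < dist x 0 / 2 := hN
        linarith
  have hLcompact : IsCompact L := TotallyBounded.isCompact_of_isClosed hLtb hLclosed
  refine ⟨L, hLcompact, ?_⟩
  -- property (H)
  intro ε hε
  obtain ⟨n, hn⟩ := exists_nat_one_div_lt hε
  refine ⟨δm n, hδmpos n, ?_⟩
  intro g hg hgb
  have hR0 : 1 < Rs n := hRs n
  have hRsε : Rs n < 1 + ε := by
    simp only [hRsdef]
    linarith
  set ρ : ℝ := (Rs n + 1 + ε) / 2 with hρdef
  have hρ1 : Rs n < ρ := by rw [hρdef]; linarith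
  have hρ2 : ρ < 1 + ε := by rw [hρdef]; linarith
  have hρpos : 0 < ρ := by linarith
  set ρnn : NNReal := ⟨ρ, hρpos.le⟩ with hρnndef
  have hρnncoe : (ρnn : ℝ) = ρ := rfl
  have hdiff : DifferentiableOn ℂ g (Metric.closedBall 0 (ρnn : ℝ)) := by
    apply hg.mono
    rw [hρnncoe]
    exact closedBall_subset_ball hρ2
  have hps := hdiff.hasFPowerSeriesOnBall (by
    rw [← NNReal.coe_pos, hρnncoe]; exact hρpos)
  set p := cauchyPowerSeries g 0 (ρnn : ℝ) with hpdef
  -- bound on the integral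
  have hmemball : ∀ θ : ℝ, circleMap 0 (ρnn : ℝ) θ ∈ Metric.ball (0 : ℂ) (1 + ε) := by
    intro θ
    rw [mem_ball, dist_zero_right, norm_circleMap_zero,
      hρnncoe, _root_.abs_of_pos hρpos]
    exact hρ2
  have hint : (∫ θ in (0:ℝ)..2 * Real.pi, ‖g (circleMap 0 (ρnn : ℝ) θ)‖) ≤
      2 * Real.pi * δm n := by
    have hc0 : Continuous fun θ : ℝ => g (circleMap 0 (ρnn : ℝ) θ) :=
      (hg.continuousOn).comp_continuous (continuous_circleMap 0 _) hmemball
    have hc := hc0.norm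
    calc (∫ θ in (0:ℝ)..2 * Real.pi, ‖g (circleMap 0 (ρnn : ℝ) θ)‖)
        ≤ ∫ _ in (0:ℝ)..2 * Real.pi, δm n := by
          apply intervalIntegral.integral_mono_on Real.two_pi_pos.le
            (hc.intervalIntegrable _ _) intervalIntegrable_const
          intro θ _
          exact hgb _ (hmemball θ)
      _ = 2 * Real.pi * δm n := by
          rw [intervalIntegral.integral_const, smul_eq_mul]
          ring
  have hcoef : ∀ k, ‖p.coeff k‖ ≤ δm n / ρ ^ k := by
    intro k
    have h1 := norm_cauchyPowerSeries_le g 0 (ρnn : ℝ) k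
    have h2 : ‖p.coeff k‖ ≤ ‖p k‖ := by
      have h3 := (p k).le_opNorm (fun _ => (1 : ℂ))
      have h4 : (∏ _i : Fin k, ‖(1 : ℂ)‖) = 1 := by simp
      rw [h4, mul_one] at h3
      have h5 : p.coeff k = p k (fun _ => 1) := rfl
      rw [h5]
      exact h3
    refine h2.trans (le_trans h1 ?_)
    rw [hρnncoe, _root_.abs_of_pos hρpos]
    have hπpos : (0 : ℝ) < 2 * Real.pi := Real.two_pi_pos
    have hintnn : (0:ℝ) ≤ (∫ θ in (0:ℝ)..2 * Real.pi, ‖g (circleMap 0 (ρnn : ℝ) θ)‖) := by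
      apply intervalIntegral.integral_nonneg Real.two_pi_pos.le
      intro θ _
      exact norm_nonneg _
    calc (2 * Real.pi)⁻¹ * (∫ θ in (0:ℝ)..2 * Real.pi, ‖g (circleMap 0 (ρnn : ℝ) θ)‖) *
          ρ⁻¹ ^ k
        ≤ (2 * Real.pi)⁻¹ * (2 * Real.pi * δm n) * ρ⁻¹ ^ k := by
          gcongr
      _ = δm n / ρ ^ k := by
          rw [inv_pow, ← div_eq_mul_inv]
          congr 1
          field_simp
  -- the coefficient sequence
  set c : ℕ →ᵇ ℂ := BoundedContinuousFunction.ofNormedAddCommGroupDiscrete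
    (fun k => p.coeff k * ((Rs n : ℝ) : ℂ) ^ k) (δm n)
    (by
      intro k
      rw [norm_mul, norm_pow, Complex.norm_real, Real.norm_eq_abs,
        _root_.abs_of_pos (by linarith : (0:ℝ) < Rs n)]
      have h1 := hcoef k
      have h2 : (Rs n / ρ) ^ k ≤ 1 :=
        pow_le_one₀ (by positivity) ((div_le_one hρpos).mpr hρ1.le)
      have h3 : ‖p.coeff k‖ * Rs n ^ k ≤ (δm n / ρ ^ k) * Rs n ^ k := by
        gcongr
      refine h3.trans ?_
      have h2' : Rs n ^ k / ρ ^ k ≤ 1 := by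
        rw [← div_pow]; exact h2
      have h4 : δm n / ρ ^ k * Rs n ^ k = δm n * (Rs n ^ k / ρ ^ k) := by
        rw [div_mul_eq_mul_div, mul_div_assoc]
      rw [h4]
      nlinarith [hδmpos n,
        div_nonneg (pow_nonneg (by linarith : (0:ℝ) ≤ Rs n) k) (pow_nonneg hρpos.le k)])
    with hcdef
  have hcnorm : ‖c‖ ≤ δm n := by
    apply BoundedContinuousFunction.norm_ofNormedAddCommGroup_le _ (hδmpos n).le
  have hcmem : c ∈ Metric.closedBall (0 : ℕ →ᵇ ℂ) (δm n) := by
    rw [mem_closedBall, dist_zero_right]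
    exact hcnorm
  refine ⟨T (Rs n) (hRs n) c, hCsL n (subset_closure ⟨c, hcmem, rfl⟩), ?_⟩
  intro z
  rw [hT (Rs n) (hRs n) c z]
  -- the sum equals g on the disk
  have hzlt : ‖(z : ℂ)‖ < Rs n := lt_of_le_of_lt (hz1 z) hR0
  have hzmem : (z : ℂ) ∈ Metric.eball (0 : ℂ) ρnn := by
    rw [Metric.mem_eball, edist_eq_enorm_sub, sub_zero]
    rw [enorm_eq_nnnorm, ENNReal.coe_lt_coe]
    have : ‖(z : ℂ)‖ < ρ := lt_of_le_of_lt (hz1 z) (by linarith)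
    rwa [← NNReal.coe_lt_coe, coe_nnnorm, hρnncoe]
  have h2 := hps.hasSum_sub hzmem
  simp only [sub_zero] at h2
  have hR0ne : ((Rs n : ℝ) : ℂ) ≠ 0 := by
    simp only [ne_eq, Complex.ofReal_eq_zero]
    linarith
  have he : (fun k => p k fun _ => (z : ℂ)) =
      fun k => (c k / ((Rs n : ℝ) : ℂ) ^ k) * (z : ℂ) ^ k := by
    funext k
    rw [FormalMultilinearSeries.apply_eq_pow_smul_coeff, smul_eq_mul]
    have hck : c k = p.coeff k * ((Rs n : ℝ) : ℂ) ^ k := rfl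
    rw [hck, mul_div_cancel_right₀ _ (pow_ne_zero k hR0ne)]
    ring
  rw [he] at h2
  exact (PropHAux.hasSum_gsum hR0 c hzlt).unique h2
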